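/- Let A be a Noetherian ring, m ⊂ A an ideal, and (M_i) an inverse system of A/m^{i+1}-modules with M_{i+1} ⊗ A/m^{i+1} ≅ M_i compatibly. If m ∈ lim← M_i maps to zero in M_i, then m ∈ m^{i+1} · (lim← M_j). -/

import Mathlib

/-!
Let `s` generate `m ^ (i + 1)` (Noetherianity) and let `x` be a compatible sequence with
`x i = 0`. Since the kernel of `M (i+k+1) → M (i+k)` is `m ^ (i+1) • m ^ k • M (i+k+1)`, one can
write `x (i+k) = ∑ a ∈ s, a • c_k a` with `f (c_{k+1} a) ≡ c_k a` modulo `m ^ k`. As `m ^ (j+1)`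
kills `M j`, the images of the `c_k a` in `M j` stabilise once `k > j`; the stable values form
elements `y a` of the inverse limit with `x = ∑ a ∈ s, a • y a`.
-/

/-- The inverse limit of an `ℕ`-indexed system of modules with transition maps
`f i : M (i+1) → M i`, realized as the submodule of compatible sequences in the
product. -/
def invLimit {R : Type*} [CommRing R] {M : ℕ → Type*}
    [∀ i, AddCommGroup (M i)] [∀ i, Module R (M i)]
    (f : ∀ i, M (i + 1) →ₗ[R] M i) : Submodule R (∀ i, M i) where
  carrier := {x | ∀ i, f i (x (i + 1)) = x i}
  add_mem' := by intro a b ha hb i; simp [ha i, hb i]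
  zero_mem' := by intro i; simp
  smul_mem' := by intro c a ha i; simp [ha i]

section InverseSystem

variable {A : Type*} [CommRing A] {M : ℕ → Type*} [∀ i, AddCommGroup (M i)]
  [∀ i, Module A (M i)] (f : ∀ i, M (i + 1) →ₗ[A] M i)

noncomputable def transition {j n : ℕ} (h : j ≤ n) : M n →ₗ[A] M j :=
  Nat.leRecOn (C := fun k => M k →ₗ[A] M j) h (fun g => g ∘ₗ f _) LinearMap.id

lemma transition_self (j : ℕ) : transition f (le_refl j) = LinearMap.id :=
  Nat.leRecOn_self _

lemma transition_succ {j n : ℕ} (h : j ≤ n) (h' : j ≤ n + 1) :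
    transition f h' = transition f h ∘ₗ f n :=
  Nat.leRecOn_succ h _

lemma transition_trans {j n k : ℕ} (hjn : j ≤ n) (hnk : n ≤ k) :
    transition f (hjn.trans hnk) = transition f hjn ∘ₗ transition f hnk := by
  induction hnk with
  | refl => rw [transition_self, LinearMap.comp_id]
  | @step k hnk ih =>
    rw [transition_succ f (hjn.trans hnk), transition_succ f hnk, ih, LinearMap.comp_assoc]

lemma comp_transition_succ {j n : ℕ} (h : j + 1 ≤ n) :
    f j ∘ₗ transition f h = transition f (j.le_succ.trans h) := by
  rw [transition_trans f j.le_succ h, transition_succ f le_rfl, transition_self,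
    LinearMap.id_comp]

lemma transition_apply_of_mem_invLimit {x : ∀ i, M i} (hx : x ∈ invLimit f) {j n : ℕ}
    (h : j ≤ n) : transition f h (x n) = x j := by
  induction h with
  | refl => rw [transition_self, LinearMap.id_apply]
  | @step n h ih => rw [transition_succ f h, LinearMap.comp_apply, hx n, ih]

end InverseSystem

section Approximation

variable {A : Type*} [CommRing A] {N P : Type*} [AddCommGroup N] [Module A N]
  [AddCommGroup P] [Module A P]

lemma exists_sum_smul_eq_of_mem_span_smul (s : Finset A) (Q : Submodule A N) {v : N}
    (hv : v ∈ Ideal.span (s : Set A) • Q) :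
    ∃ c : A → N, (∀ a, c a ∈ Q) ∧ ∑ a ∈ s, a • c a = v := by
  rw [Submodule.span_smul_eq, Submodule.mem_set_smul] at hv
  obtain ⟨c, hcs, rfl⟩ := hv
  refine ⟨fun a => c a, fun a => (c a).2, ?_⟩
  rw [Finsupp.sum_of_support_subset c hcs _ fun a _ => smul_zero a]
  simp

lemma exists_lift_sum_smul {g : N →ₗ[A] P} (hg : Function.Surjective g) (s : Finset A)
    (K : Ideal A) (hker : LinearMap.ker g ≤ (Ideal.span (s : Set A) * K) • ⊤) {v : N}
    {c : A → P} (hv : g v = ∑ a ∈ s, a • c a) :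
    ∃ c' : A → N, ∑ a ∈ s, a • c' a = v ∧ ∀ a, g (c' a) - c a ∈ K • (⊤ : Submodule A P) := by
  choose z hz using fun a => hg (c a)
  have hdiff : v - ∑ a ∈ s, a • z a ∈ Ideal.span (s : Set A) • K • (⊤ : Submodule A N) := by
    rw [← Submodule.mul_smul]
    exact hker (by simp [hv, hz])
  obtain ⟨w, hwK, hw⟩ := exists_sum_smul_eq_of_mem_span_smul s _ hdiff
  refine ⟨z + w, ?_, fun a => ?_⟩
  · simp only [Pi.add_apply, smul_add, Finset.sum_add_distrib, hw, add_sub_cancel]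
  · rw [Pi.add_apply, map_add, hz, add_sub_cancel_left]
    exact Submodule.smul_top_le_comap_smul_top K g (hwK a)

end Approximation

section AdicLimit

variable {A : Type*} [CommRing A] {m : Ideal A} {M : ℕ → Type*} [∀ i, AddCommGroup (M i)]
  [∀ i, Module A (M i)] (f : ∀ i, M (i + 1) →ₗ[A] M i)

lemma transition_eq_zero_of_mem_pow_smul_top
    (htor : ∀ i, ∀ a ∈ m ^ (i + 1), ∀ x : M i, a • x = 0) {j k n : ℕ} (hjk : j < k)
    (h : j ≤ n) {v : M n} (hv : v ∈ m ^ k • (⊤ : Submodule A (M n))) :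
    transition f h v = 0 := by
  have hmem : transition f h v ∈ m ^ (j + 1) • (⊤ : Submodule A (M j)) :=
    Submodule.smul_mono_left (Ideal.pow_le_pow_right hjk)
      (Submodule.smul_top_le_comap_smul_top _ _ hv)
  refine Submodule.smul_induction_on hmem (fun a ha y _ => htor j a ha y) fun _ _ hy hz => ?_
  rw [hy, hz, add_zero]

variable (i : ℕ) (d : ∀ k, M (i + k))

/-- For `d` compatible modulo `m ^ k` at stage `k`, the images of `d` in `M j` stop changing from
stage `j + 1` on (`transition_eq_cauchyLimit`). -/
noncomputable def cauchyLimit (j : ℕ) : M j :=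
  transition f (by omega : j ≤ i + (j + 1)) (d (j + 1))

variable {f i d}

lemma transition_eq_cauchyLimit (htor : ∀ i, ∀ a ∈ m ^ (i + 1), ∀ x : M i, a • x = 0)
    (hd : ∀ k, f (i + k) (d (k + 1)) - d k ∈ m ^ k • (⊤ : Submodule A (M (i + k)))) {j k : ℕ}
    (hjk : j + 1 ≤ k) (h : j ≤ i + k) : transition f h (d k) = cauchyLimit f i d j := by
  induction k, hjk using Nat.le_induction with
  | base => rfl
  | succ k hjk ih =>
    have h' : j ≤ i + k := by omega
    rw [transition_succ f h', LinearMap.comp_apply,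
      ← sub_add_cancel (f (i + k) (d (k + 1))) (d k), map_add,
      transition_eq_zero_of_mem_pow_smul_top f htor hjk h' (hd k), zero_add, ih h']

lemma cauchyLimit_mem_invLimit (htor : ∀ i, ∀ a ∈ m ^ (i + 1), ∀ x : M i, a • x = 0)
    (hd : ∀ k, f (i + k) (d (k + 1)) - d k ∈ m ^ k • (⊤ : Submodule A (M (i + k)))) :
    cauchyLimit f i d ∈ invLimit f := fun j => by
  rw [cauchyLimit, ← LinearMap.comp_apply, comp_transition_succ,
    transition_eq_cauchyLimit htor hd (by omega)]

end AdicLimit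

lemma exists_cauchy_sum_smul_eq {A : Type*} [CommRing A] {m : Ideal A} {M : ℕ → Type*}
    [∀ i, AddCommGroup (M i)] [∀ i, Module A (M i)] {f : ∀ i, M (i + 1) →ₗ[A] M i}
    (hsurj : ∀ i, Function.Surjective (f i))
    (hker : ∀ i, LinearMap.ker (f i) ≤ (m ^ (i + 1)) • (⊤ : Submodule A (M (i + 1))))
    {i : ℕ} {x : ∀ i, M i} (hx : x ∈ invLimit f) (hxi : x i = 0) {s : Finset A}
    (hs : Ideal.span (s : Set A) = m ^ (i + 1)) :
    ∃ c : ∀ k, A → M (i + k), (∀ k, ∑ a ∈ s, a • c k a = x (i + k)) ∧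
      ∀ k a, f (i + k) (c (k + 1) a) - c k a ∈ m ^ k • (⊤ : Submodule A (M (i + k))) := by
  have hker' (k : ℕ) : LinearMap.ker (f (i + k)) ≤ (Ideal.span (s : Set A) * m ^ k) • ⊤ := by
    rw [hs, ← pow_add, show i + 1 + k = i + k + 1 by omega]
    exact hker (i + k)
  choose next hnext using fun k (approx : {c : A → M (i + k) // ∑ a ∈ s, a • c a = x (i + k)}) =>
    exists_lift_sum_smul (hsurj (i + k)) s (m ^ k) (hker' k) (v := x (i + k + 1))
      (by rw [hx (i + k), approx.2])
  let c (k : ℕ) : {c : A → M (i + k) // ∑ a ∈ s, a • c a = x (i + k)} :=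
    Nat.rec ⟨0, by simp [hxi]⟩ (fun k prev => ⟨next k prev, (hnext k prev).1⟩) k
  exact ⟨fun k => (c k).1, fun k => (c k).2, fun k => (hnext k (c k)).2⟩

/-- Let `A` be a Noetherian ring, `m ⊆ A` an ideal, and
`(M i)` an inverse system of `A/m^(i+1)`-modules with
`M (i+1) ⊗ A/m^(i+1) ≅ M i` compatibly (surjective transitions with kernel
`m^(i+1) • M (i+1)`).  If an element of `lim← M j` maps to zero in `M i`, then
it lies in `m^(i+1) · (lim← M j)`. -/
theorem stmt7 {A : Type*} [CommRing A] [IsNoetherianRing A] (m : Ideal A)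
    {M : ℕ → Type*} [∀ i, AddCommGroup (M i)] [∀ i, Module A (M i)]
    (f : ∀ i, M (i + 1) →ₗ[A] M i)
    (htor : ∀ i, ∀ a ∈ m ^ (i + 1), ∀ x : M i, a • x = 0)
    (hsurj : ∀ i, Function.Surjective (f i))
    (hker : ∀ i, LinearMap.ker (f i) = (m ^ (i + 1)) • (⊤ : Submodule A (M (i + 1)))) :
    ∀ i, ∀ x ∈ invLimit f, x i = 0 → x ∈ (m ^ (i + 1)) • (invLimit f) := by
  intro i x hx hxi
  obtain ⟨s, hs⟩ : (m ^ (i + 1)).FG := IsNoetherian.noetherian _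
  obtain ⟨c, hc_sum, hc_cauchy⟩ :=
    exists_cauchy_sum_smul_eq hsurj (fun j => (hker j).le) hx hxi hs
  have hx_eq : x = ∑ a ∈ s, a • cauchyLimit f i (fun k => c k a) := by
    funext j
    simp only [Finset.sum_apply, Pi.smul_apply, cauchyLimit, ← map_smul, ← map_sum, hc_sum,
      transition_apply_of_mem_invLimit f hx]
  rw [hx_eq, ← hs]
  exact Submodule.sum_mem _ fun a ha => Submodule.smul_mem_smul (Submodule.subset_span ha)
    (cauchyLimit_mem_invLimit htor (hc_cauchy · a))
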